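/- arXiv:1901.04213 — 3 statements merged into one kernel-verified Lean document; each statement's English description precedes it below -/
import Mathlib

section
/- Let Ω be a complete separable metric space and {μ_i} a sequence of finite Borel measures on Ω that is uniformly tight and uniformly bounded in total variation norm. Then {μ_i} admits a subsequence converging weakly to some finite Borel measure on Ω. -/
/-!
Along a subsequence the total masses converge to some `m`. If `m = 0` the measures tend to `0`.
Otherwise the masses eventually stay above `m / 2`, so the normalized probability measures are
again tight; by Prokhorov's theorem their closure is compact, and since convergence of probability
measures on a separable metric space is metrizable, a further subsequence converges to some `P`.
The original measures then converge to `m • P`.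
-/

open MeasureTheory Filter Topology ENNReal

open Set TopologicalSpace
open scoped NNReal

namespace MeasureTheory

lemma IsTightMeasureSet.of_forall_le_smul {Ω : Type*} [MeasurableSpace Ω] [TopologicalSpace Ω]
    {S T : Set (Measure Ω)} {c : ℝ≥0∞} (hc : c ≠ ∞) (hS : IsTightMeasureSet S)
    (hT : ∀ ν ∈ T, ∃ μ ∈ S, ν ≤ c • μ) : IsTightMeasureSet T := by
  rw [isTightMeasureSet_iff_exists_isCompact_measure_compl_le] at hS ⊢
  intro ε hε
  obtain ⟨K, hK, hKε⟩ := hS (ε / c) (ENNReal.div_pos hε.ne' hc)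
  refine ⟨K, hK, fun ν hν => ?_⟩
  obtain ⟨μ, hμ, hνμ⟩ := hT ν hν
  calc ν Kᶜ ≤ c * μ Kᶜ := hνμ Kᶜ
    _ ≤ c * (ε / c) := by gcongr; exact hKε μ hμ
    _ ≤ ε := ENNReal.mul_div_le

namespace FiniteMeasure

variable {Ω : Type*} [MeasurableSpace Ω] [TopologicalSpace Ω] [Nonempty Ω]

lemma isTightMeasureSet_range_normalize {ι : Type*} {μs : ι → FiniteMeasure Ω}
    {c : ℝ≥0} (hc : 0 < c) (hmass : ∀ i, c ≤ (μs i).mass)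
    (hμs : IsTightMeasureSet (range fun i => (μs i : Measure Ω))) :
    IsTightMeasureSet (range fun i => ((μs i).normalize : Measure Ω)) := by
  refine hμs.of_forall_le_smul (c := (c⁻¹ : ℝ≥0)) ENNReal.coe_ne_top ?_
  rintro _ ⟨i, rfl⟩
  refine ⟨μs i, mem_range_self i, fun s => ?_⟩
  have hne : μs i ≠ 0 := (mass_nonzero_iff _).mp (hc.trans_le (hmass i)).ne'
  simp only [toMeasure_normalize_eq_of_nonzero _ hne, Measure.smul_apply, ENNReal.smul_def,
    smul_eq_mul]
  gcongr
  exact hmass i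

lemma tendsto_smul_of_tendsto_normalize_of_tendsto_mass [OpensMeasurableSpace Ω] {γ : Type*}
    {F : Filter γ} {μs : γ → FiniteMeasure Ω} {P : ProbabilityMeasure Ω} {m : ℝ≥0}
    (hP : Tendsto (fun i => (μs i).normalize) F (𝓝 P))
    (hm : Tendsto (fun i => (μs i).mass) F (𝓝 m)) :
    Tendsto μs F (𝓝 (m • P.toFiniteMeasure)) := by
  rw [ProbabilityMeasure.tendsto_nhds_iff_toFiniteMeasure_tendsto_nhds,
    tendsto_iff_forall_testAgainstNN_tendsto] at hP
  rw [tendsto_iff_forall_testAgainstNN_tendsto]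
  intro f
  rw [smul_testAgainstNN_apply, smul_eq_mul]
  exact (hm.mul (hP f)).congr fun i => (testAgainstNN_eq_mass_mul _ f).symm

end FiniteMeasure

section Metrizable

variable {Ω : Type*} [MeasurableSpace Ω] [TopologicalSpace Ω] [MetrizableSpace Ω]
  [SeparableSpace Ω] [BorelSpace Ω]

lemma ProbabilityMeasure.exists_tendsto_subseq_of_isTightMeasureSet
    {Ps : ℕ → ProbabilityMeasure Ω} (hPs : IsTightMeasureSet (range fun n => (Ps n : Measure Ω))) :
    ∃ (φ : ℕ → ℕ) (P : ProbabilityMeasure Ω), StrictMono φ ∧ Tendsto (Ps ∘ φ) atTop (𝓝 P) := by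
  have hcompact : IsCompact (closure (range Ps)) := isCompact_closure_of_isTightMeasureSet
    (by simp only [mem_range, exists_exists_eq_and]; exact hPs)
  obtain ⟨P, -, φ, hφ, hlim⟩ := hcompact.isSeqCompact fun n => subset_closure (mem_range_self n)
  exact ⟨φ, P, hφ, hlim⟩

lemma FiniteMeasure.exists_tendsto_subseq_of_mass_le_of_isTightMeasureSet
    {μs : ℕ → FiniteMeasure Ω} {C : ℝ≥0} (hC : ∀ n, (μs n).mass ≤ C)
    (hμs : IsTightMeasureSet (range fun n => (μs n : Measure Ω))) :
    ∃ (φ : ℕ → ℕ) (ν : FiniteMeasure Ω), StrictMono φ ∧ Tendsto (μs ∘ φ) atTop (𝓝 ν) := by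
  obtain ⟨m, -, ψ, hψ, hm⟩ :=
    isCompact_Icc.isSeqCompact (fun n => ⟨zero_le, hC n⟩ : ∀ n, (μs n).mass ∈ Icc 0 C)
  rcases eq_or_ne m 0 with rfl | hm0
  · exact ⟨ψ, 0, hψ, tendsto_zero_of_tendsto_zero_mass hm⟩
  have hm_pos : 0 < m := pos_iff_ne_zero.mpr hm0
  obtain ⟨χ, hχ, hχm⟩ := extraction_of_eventually_atTop (hm.eventually (lt_mem_nhds
    (half_lt_self hm_pos)))
  have : Nonempty Ω := by
    by_contra hΩ
    have := hχm 0
    simp [mass, coeFn_def, univ_eq_empty_iff.mpr (not_nonempty_iff.mp hΩ)] at this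
  have htight : IsTightMeasureSet (range fun n => ((μs (ψ (χ n))).normalize : Measure Ω)) :=
    isTightMeasureSet_range_normalize (half_pos hm_pos) (fun n => (hχm n).le)
      (hμs.subset (range_comp_subset_range (ψ ∘ χ) fun n => (μs n : Measure Ω)))
  obtain ⟨φ, P, hφ, hP⟩ := ProbabilityMeasure.exists_tendsto_subseq_of_isTightMeasureSet htight
  exact ⟨ψ ∘ χ ∘ φ, m • P.toFiniteMeasure, hψ.comp (hχ.comp hφ),
    tendsto_smul_of_tendsto_normalize_of_tendsto_mass hP (hm.comp (hχ.comp hφ).tendsto_atTop)⟩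

end Metrizable

end MeasureTheory

theorem prokhorov_exists_weakly_convergent_subseq_general
    {Ω : Type*} [MetricSpace Ω] [TopologicalSpace.SeparableSpace Ω]
    [MeasurableSpace Ω] [BorelSpace Ω]
    (μi : ℕ → Measure Ω) [∀ i, IsFiniteMeasure (μi i)]
    (htight : ∀ ε : ℝ≥0∞, 0 < ε → ∃ K : Set Ω, IsCompact K ∧ ∀ i, μi i Kᶜ < ε)
    (hbdd : ∃ C : ℝ≥0∞, C < ∞ ∧ ∀ i, μi i Set.univ ≤ C) :
    ∃ (φ : ℕ → ℕ) (ν : Measure Ω), StrictMono φ ∧ IsFiniteMeasure ν ∧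
      ∀ h : Ω → ℝ, (∃ M : ℝ, ∀ x, |h x| ≤ M) → Continuous h →
        Tendsto (fun k => ∫ x, h x ∂(μi (φ k))) atTop (𝓝 (∫ x, h x ∂ν)) := by
  let μs : ℕ → FiniteMeasure Ω := fun i => ⟨μi i, inferInstance⟩
  obtain ⟨C, hC, hμC⟩ := hbdd
  have hmass : ∀ n, (μs n).mass ≤ C.toNNReal := fun n => ENNReal.toNNReal_mono hC.ne (hμC n)
  have hμs : IsTightMeasureSet (range fun n => (μs n : Measure Ω)) := by
    refine isTightMeasureSet_iff_exists_isCompact_measure_compl_le.mpr fun ε hε => ?_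
    obtain ⟨K, hK, hKε⟩ := htight ε hε
    exact ⟨K, hK, by rintro _ ⟨i, rfl⟩; exact (hKε i).le⟩
  obtain ⟨φ, ν, hφ, hlim⟩ :=
    FiniteMeasure.exists_tendsto_subseq_of_mass_le_of_isTightMeasureSet hmass hμs
  refine ⟨φ, ν, hφ, inferInstance, fun h ⟨M, hM⟩ hcont => ?_⟩
  exact FiniteMeasure.tendsto_iff_forall_integral_tendsto.mp hlim
    (BoundedContinuousFunction.ofNormedAddCommGroup h hcont M hM)

/-- Generalized Prokhorov theorem (sufficiency direction): a uniformly tight sequence of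
finite Borel measures on a Polish space, uniformly bounded in variation, admits a
weakly convergent subsequence. -/
theorem prokhorov_exists_weakly_convergent_subseq
    {Ω : Type*} [MetricSpace Ω] [CompleteSpace Ω] [TopologicalSpace.SeparableSpace Ω]
    [MeasurableSpace Ω] [BorelSpace Ω]
    (μi : ℕ → Measure Ω) [∀ i, IsFiniteMeasure (μi i)]
    (htight : ∀ ε : ℝ≥0∞, 0 < ε → ∃ K : Set Ω, IsCompact K ∧ ∀ i, μi i Kᶜ < ε)
    (hbdd : ∃ C : ℝ≥0∞, C < ∞ ∧ ∀ i, μi i Set.univ ≤ C) :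
    ∃ (φ : ℕ → ℕ) (ν : Measure Ω), StrictMono φ ∧ IsFiniteMeasure ν ∧
      ∀ h : Ω → ℝ, (∃ M : ℝ, ∀ x, |h x| ≤ M) → Continuous h →
        Tendsto (fun k => ∫ x, h x ∂(μi (φ k))) atTop (𝓝 (∫ x, h x ∂ν)) :=
  prokhorov_exists_weakly_convergent_subseq_general μi htight hbdd
end

section
/- Let Ω be a metric space, {μ_i} probability measures on Ω converging weakly to μ, and {η_i} a sequence of signed Borel measures with η_i = γ_i · μ_i (density γ_i) where |γ_i(ω)| ≤ M for μ_i-a.e. ω, for a constant M > 0. Suppose η_i converges weakly to a signed measure η, in the sense that η_i(B) → η(B) for all Borel sets B in a family generating the Borel σ-algebra and closed under the conditions of the Portmanteau theorem. Then η is absolutely continuous with respect to μ, and its Radon–Nikodym density γ satisfies |γ(ω)| ≤ M for μ-a.e. ω. -/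
/-!
Passing to the limit in `|η_i B| ≤ M μ_i B` gives `|η B| ≤ M μ B` on the generating algebra.
An algebra generating the σ-algebra approximates every measurable set in measure for any finite
measure, so an inequality between finite measures on the algebra holds everywhere; applied to the
Jordan parts of `M μ ∓ η` this extends the bound to all measurable sets. The bound forces
`η ≪ μ`, and comparing set integrals bounds the Radon–Nikodym density by `M` almost everywhere.
-/

open MeasureTheory Filter Topology
open scoped symmDiff

namespace MeasureTheory

variable {Ω : Type*} [m : MeasurableSpace Ω] {S : Set (Set Ω)}

theorem Measure.le_of_forall_mem_isSetAlgebra (hS : IsSetAlgebra S)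
    (hgen : MeasurableSpace.generateFrom S = m) {ν₁ ν₂ : Measure Ω} [IsFiniteMeasure ν₁]
    [IsFiniteMeasure ν₂] (h : ∀ s ∈ S, ν₁ s ≤ ν₂ s) : ν₁ ≤ ν₂ := by
  refine Measure.le_iff.2 fun s hs => ENNReal.le_of_forall_pos_le_add fun ε hε _ => ?_
  obtain ⟨t, ht, hst⟩ := (Measure.MeasureDense.of_generateFrom_isSetAlgebra_finite (ν₁ + ν₂)
    hS hgen.symm).approx s hs (measure_ne_top _ _) ε hε
  rw [ENNReal.ofReal_coe_nnreal, Measure.add_apply] at hst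
  calc ν₁ s ≤ ν₁ t + ν₁ (s ∆ t) := tsub_le_iff_left.1 le_measure_symmDiff
    _ ≤ ν₂ t + ν₁ (s ∆ t) := add_le_add_left (h t ht) _
    _ ≤ ν₂ s + ν₂ (t ∆ s) + ν₁ (s ∆ t) :=
        add_le_add_left (tsub_le_iff_left.1 le_measure_symmDiff) _
    _ = ν₂ s + (ν₁ (s ∆ t) + ν₂ (s ∆ t)) := by rw [symmDiff_comm t]; ring
    _ ≤ ν₂ s + ε := by gcongr

namespace SignedMeasure

theorem nonneg_of_forall_mem_isSetAlgebra (hS : IsSetAlgebra S)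
    (hgen : MeasurableSpace.generateFrom S = m) {ρ : SignedMeasure Ω} (h : ∀ s ∈ S, 0 ≤ ρ s)
    {s : Set Ω} (hs : MeasurableSet s) : 0 ≤ ρ s := by
  have hle : ρ.toJordanDecomposition.negPart ≤ ρ.toJordanDecomposition.posPart := by
    refine Measure.le_of_forall_mem_isSetAlgebra hS hgen fun t ht => ?_
    have hρt := h t ht
    rw [ρ.apply_eq_posPart_real_sub_negPart_real
      (hgen ▸ MeasurableSpace.measurableSet_generateFrom ht), sub_nonneg] at hρt
    exact (ENNReal.toReal_le_toReal (measure_ne_top _ _) (measure_ne_top _ _)).1 hρt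
  rw [ρ.apply_eq_posPart_real_sub_negPart_real hs, sub_nonneg]
  exact ENNReal.toReal_mono (measure_ne_top _ _) (hle s)

theorem le_of_forall_mem_isSetAlgebra (hS : IsSetAlgebra S)
    (hgen : MeasurableSpace.generateFrom S = m) {η : SignedMeasure Ω} {μ : Measure Ω}
    [IsFiniteMeasure μ] {M : ℝ} (h : ∀ s ∈ S, η s ≤ M * μ.real s) {s : Set Ω}
    (hs : MeasurableSet s) : η s ≤ M * μ.real s := by
  have hρ : ∀ s, MeasurableSet s → (M • μ.toSignedMeasure - η) s = M * μ.real s - η s :=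
    fun s hs => by
      rw [_root_.sub_apply, _root_.smul_apply,
        Measure.toSignedMeasure_apply_measurable hs, smul_eq_mul]
  have hnonneg := nonneg_of_forall_mem_isSetAlgebra hS hgen (ρ := M • μ.toSignedMeasure - η)
    (fun t ht => by
      rw [hρ t (hgen ▸ MeasurableSpace.measurableSet_generateFrom ht), sub_nonneg]
      exact h t ht) hs
  rwa [hρ s hs, sub_nonneg] at hnonneg

theorem abs_le_of_forall_mem_isSetAlgebra (hS : IsSetAlgebra S)
    (hgen : MeasurableSpace.generateFrom S = m) {η : SignedMeasure Ω} {μ : Measure Ω}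
    [IsFiniteMeasure μ] {M : ℝ} (h : ∀ s ∈ S, |η s| ≤ M * μ.real s) {s : Set Ω}
    (hs : MeasurableSet s) : |η s| ≤ M * μ.real s :=
  abs_le'.2 ⟨le_of_forall_mem_isSetAlgebra hS hgen (fun t ht => (abs_le'.1 (h t ht)).1) hs,
    le_of_forall_mem_isSetAlgebra hS hgen (η := -η) (fun t ht => (abs_le'.1 (h t ht)).2) hs⟩

theorem absolutelyContinuous_of_abs_le {η : SignedMeasure Ω} {μ : Measure Ω} {M : ℝ}
    (h : ∀ s, MeasurableSet s → |η s| ≤ M * μ.real s) : η ≪ᵥ μ.toENNRealVectorMeasure := by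
  refine VectorMeasure.AbsolutelyContinuous.mk fun s hs hμs => abs_nonpos_iff.1 ?_
  rw [Measure.toENNRealVectorMeasure_apply_measurable hs] at hμs
  simpa [measureReal_def, hμs] using h s hs

theorem setIntegral_rnDeriv {η : SignedMeasure Ω} {μ : Measure Ω} [SigmaFinite μ]
    (h : η ≪ᵥ μ.toENNRealVectorMeasure) {s : Set Ω} (hs : MeasurableSet s) :
    ∫ x in s, η.rnDeriv μ x ∂μ = η s := by
  conv_rhs => rw [← withDensityᵥ_rnDeriv_eq η μ h]
  exact (withDensityᵥ_apply (integrable_rnDeriv η μ) hs).symm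

theorem ae_abs_rnDeriv_le {η : SignedMeasure Ω} {μ : Measure Ω} [IsFiniteMeasure μ] {M : ℝ}
    (h : ∀ s, MeasurableSet s → |η s| ≤ M * μ.real s) : ∀ᵐ x ∂μ, |η.rnDeriv μ x| ≤ M := by
  have hac := absolutelyContinuous_of_abs_le h
  have hint := integrable_rnDeriv η μ
  have hle : η.rnDeriv μ ≤ᵐ[μ] fun _ => M := by
    refine ae_le_of_forall_setIntegral_le hint (integrable_const M) fun s hs _ => ?_
    rw [setIntegral_rnDeriv hac hs, setIntegral_const, smul_eq_mul, mul_comm]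
    exact (le_abs_self _).trans (h s hs)
  have hge : (fun _ => -M) ≤ᵐ[μ] η.rnDeriv μ := by
    refine ae_le_of_forall_setIntegral_le (integrable_const (-M)) hint fun s hs _ => ?_
    rw [setIntegral_rnDeriv hac hs, setIntegral_const, smul_eq_mul, mul_neg, mul_comm]
    exact neg_le_of_abs_le (h s hs)
  filter_upwards [hle, hge] with x hx₁ hx₂
  exact abs_le.2 ⟨hx₂, hx₁⟩

end SignedMeasure
end MeasureTheory

theorem signedMeasure_limit_absolutelyContinuous_with_bounded_density_general
    {Ω : Type*} [m : MeasurableSpace Ω]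
    (μi : ℕ → Measure Ω) (μ : Measure Ω)
    [∀ i, IsProbabilityMeasure (μi i)] [IsProbabilityMeasure μ]
    (γi : ℕ → Ω → ℝ)
    (M : ℝ) (hbd : ∀ i, ∀ᵐ ω ∂(μi i), |γi i ω| ≤ M)
    (η : SignedMeasure Ω)
    (S : Set (Set Ω)) (hSalg : IsSetAlgebra S) (hSgen : MeasurableSpace.generateFrom S = m)
    (hSconv : ∀ B ∈ S,
      Tendsto (fun i => ∫ x in B, γi i x ∂(μi i)) atTop (𝓝 (η B)) ∧
      Tendsto (fun i => μi i B) atTop (𝓝 (μ B))) :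
    η ≪ᵥ μ.toENNRealVectorMeasure ∧
    ∃ γ : Ω → ℝ, Measurable γ ∧ (∀ᵐ ω ∂μ, |γ ω| ≤ M) ∧
      ∀ B : Set Ω, MeasurableSet B → η B = ∫ x in B, γ x ∂μ := by
  have hS : ∀ B ∈ S, |η B| ≤ M * μ.real B := fun B hB => by
    obtain ⟨hη, hμ⟩ := hSconv B hB
    refine le_of_tendsto_of_tendsto' hη.abs
      (((ENNReal.tendsto_toReal (measure_ne_top μ B)).comp hμ).const_mul M) fun i => ?_
    exact norm_setIntegral_le_of_norm_le_const_ae' (measure_lt_top _ _)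
      ((hbd i).mono fun _ hx _ => (Real.norm_eq_abs _).trans_le hx)
  have hbound : ∀ B, MeasurableSet B → |η B| ≤ M * μ.real B :=
    fun B hB => SignedMeasure.abs_le_of_forall_mem_isSetAlgebra hSalg hSgen hS hB
  have hac := SignedMeasure.absolutelyContinuous_of_abs_le hbound
  exact ⟨hac, η.rnDeriv μ, SignedMeasure.measurable_rnDeriv η μ,
    SignedMeasure.ae_abs_rnDeriv_le hbound,
    fun B hB => (SignedMeasure.setIntegral_rnDeriv hac hB).symm⟩

/-- If η_i = γ_i·μ_i with uniformly bounded densities, μ_i → μ weakly, and η_i(B) → η(B)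
on a generating π-system of Borel sets on which also μ_i(B) → μ(B), then η ≪ μ with
Radon–Nikodym density bounded by the same constant M, μ-a.e. -/
theorem signedMeasure_limit_absolutelyContinuous_with_bounded_density
    {Ω : Type*} [MetricSpace Ω] [m : MeasurableSpace Ω] [BorelSpace Ω]
    (μi : ℕ → Measure Ω) (μ : Measure Ω)
    [∀ i, IsProbabilityMeasure (μi i)] [IsProbabilityMeasure μ]
    (hweak : ∀ h : Ω → ℝ, (∃ M : ℝ, ∀ x, |h x| ≤ M) → Continuous h →
      Tendsto (fun i => ∫ x, h x ∂(μi i)) atTop (𝓝 (∫ x, h x ∂μ)))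
    (γi : ℕ → Ω → ℝ) (hmeas : ∀ i, Measurable (γi i))
    (M : ℝ) (hM : 0 < M) (hbd : ∀ i, ∀ᵐ ω ∂(μi i), |γi i ω| ≤ M)
    (hint : ∀ i, Integrable (γi i) (μi i))
    (η : SignedMeasure Ω)
    (S : Set (Set Ω)) (hSalg : IsSetAlgebra S) (hSgen : MeasurableSpace.generateFrom S = m)
    (hSmeas : ∀ B ∈ S, MeasurableSet B)
    (hSconv : ∀ B ∈ S,
      Tendsto (fun i => ∫ x in B, γi i x ∂(μi i)) atTop (𝓝 (η B)) ∧
      Tendsto (fun i => μi i B) atTop (𝓝 (μ B))) :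
    η ≪ᵥ μ.toENNRealVectorMeasure ∧
    ∃ γ : Ω → ℝ, Measurable γ ∧ (∀ᵐ ω ∂μ, |γ ω| ≤ M) ∧
      ∀ B : Set Ω, MeasurableSet B → η B = ∫ x in B, γ x ∂μ :=
  signedMeasure_limit_absolutelyContinuous_with_bounded_density_general (m := m) μi μ γi M hbd η S
    hSalg hSgen hSconv
end

section
/- Under the assumptions of the preceding setup (uniform Lipschitz constant k_f(t) in x and uniform bound c on f), for any two measurable controls u, u' with values u(t), u'(t) ∈ U(t), and for every ω, the associated trajectories with common initial condition x_0 satisfy ‖x(·,u,ω) − x(·,u',ω)‖_{W^{1,1}} ≤ 2c·exp(∫_0^T k_f(s) ds)·meas{t ∈ [0,T] : u(t) ≠ u'(t)}. -/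
/-!
Write `ρ = ‖ẋ_u - ẋ_{u'}‖` and `Φ t = ∫₀ᵗ ρ`, so that `‖x_u t - x_{u'} t‖ ≤ Φ t`. Where
`u = u'` the Lipschitz bound gives `ρ ≤ k_f Φ`; elsewhere the triangle inequality through
`f(x_{u'}, u)` adds at most `2c`. Integrating, `Φ t ≤ 2c·meas{u ≠ u'} + ∫₀ᵗ k_f Φ`, and
Grönwall's inequality at `t = T` gives the estimate. Grönwall is proved for an integrable
coefficient: `(A + ∫₀ᵗ k_f Φ)·exp(-∫₀ᵗ k_f)` is absolutely continuous with a.e. nonpositive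
derivative.
-/

open MeasureTheory Set Filter intervalIntegral

theorem LipschitzOnWith.comp_absolutelyContinuousOnInterval {X Y : Type*}
    [PseudoMetricSpace X] [PseudoMetricSpace Y] {g : X → Y} {f : ℝ → X} {K : NNReal}
    {s : Set X} {a b : ℝ} (hg : LipschitzOnWith K g s)
    (hf : AbsolutelyContinuousOnInterval f a b) (hfs : MapsTo f (uIcc a b) s) :
    AbsolutelyContinuousOnInterval (g ∘ f) a b := by
  unfold AbsolutelyContinuousOnInterval at hf ⊢
  refine squeeze_zero' (Eventually.of_forall fun _ ↦ Finset.sum_nonneg fun _ _ ↦ dist_nonneg)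
    ?_ (by simpa using hf.const_mul (K : ℝ))
  rw [eventually_inf_principal]
  filter_upwards with E hE
  rw [Finset.mul_sum]
  gcongr with i hi
  exact hg.dist_le_mul _ (hfs (hE.1 i hi).1) _ (hfs (hE.1 i hi).2)

theorem LocallyLipschitz.comp_absolutelyContinuousOnInterval {X Y : Type*}
    [SeminormedAddCommGroup X] [PseudoMetricSpace Y] {g : X → Y} {f : ℝ → X} {a b : ℝ}
    (hg : LocallyLipschitz g) (hf : AbsolutelyContinuousOnInterval f a b) :
    AbsolutelyContinuousOnInterval (g ∘ f) a b := by
  obtain ⟨K, hK⟩ := hg.locallyLipschitzOn.exists_lipschitzOnWith_of_compact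
    (isCompact_uIcc.image_of_continuousOn hf.continuousOn)
  exact hK.comp_absolutelyContinuousOnInterval hf (mapsTo_image f _)

theorem le_mul_exp_integral_of_le_add_integral {g φ : ℝ → ℝ} {A a b : ℝ} (hab : a ≤ b)
    (hg : IntervalIntegrable g volume a b) (hg0 : ∀ᵐ t, t ∈ Icc a b → 0 ≤ g t)
    (hgφ : IntervalIntegrable (fun t ↦ g t * φ t) volume a b)
    (hφ : ∀ t ∈ Icc a b, φ t ≤ A + ∫ s in a..t, g s * φ s) :
    φ b ≤ A * Real.exp (∫ s in a..b, g s) := by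
  set ψ : ℝ → ℝ := fun t ↦ A + ∫ s in a..t, g s * φ s
  set K : ℝ → ℝ := fun t ↦ ∫ s in a..t, g s
  have hψ : AbsolutelyContinuousOnInterval ψ a b :=
    (LipschitzWith.const A).lipschitzOnWith.absolutelyContinuousOnInterval.fun_add
      (hgφ.absolutelyContinuousOnInterval_intervalIntegral left_mem_uIcc)
  have hE : AbsolutelyContinuousOnInterval (fun t ↦ Real.exp (-K t)) a b :=
    (Real.contDiff_exp (n := 1)).locallyLipschitz.comp_absolutelyContinuousOnInterval
      (hg.absolutelyContinuousOnInterval_intervalIntegral left_mem_uIcc).fun_neg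
  -- `ψ e^{-K}` is nonincreasing, since `(ψ e^{-K})' = g (φ - ψ) e^{-K} ≤ 0`.
  have hderiv : ∀ᵐ t, t ∈ Ioc a b → deriv (fun t ↦ ψ t * Real.exp (-K t)) t ≤ 0 := by
    filter_upwards [hgφ.ae_hasDerivAt_integral, hg.ae_hasDerivAt_integral, hg0]
      with t hP hK h0 ht
    have htI : t ∈ Icc a b := Ioc_subset_Icc_self ht
    have htu : t ∈ uIcc a b := by rwa [uIcc_of_le hab]
    have hd : HasDerivAt (fun t ↦ ψ t * Real.exp (-K t))
        (g t * φ t * Real.exp (-K t) + ψ t * (Real.exp (-K t) * -g t)) t :=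
      ((hP htu a left_mem_uIcc).const_add A).mul (hK htu a left_mem_uIcc).neg.exp
    rw [hd.deriv]
    have := mul_le_mul_of_nonneg_left (hφ t htI) (h0 htI)
    nlinarith [Real.exp_pos (-K t)]
  have hmono := (hψ.fun_mul hE).integral_deriv_eq_sub
  rw [intervalIntegral.integral_of_le hab] at hmono
  have hle := hmono ▸ integral_nonpos_of_ae ((ae_restrict_iff' measurableSet_Ioc).2 hderiv)
  simp only [ψ, K, integral_same, add_zero, neg_zero, Real.exp_zero, mul_one,
    sub_nonpos] at hle
  calc φ b ≤ ψ b := hφ b (right_mem_Icc.2 hab)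
    _ = ψ b * Real.exp (-K b) * Real.exp (K b) := by
        rw [mul_assoc, ← Real.exp_add, neg_add_cancel, Real.exp_zero, mul_one]
    _ ≤ A * Real.exp (K b) := by gcongr

theorem integral_le_mul_measureReal_of_ae_le {α : Type*} [MeasurableSpace α] {μ : Measure α}
    [IsFiniteMeasure μ] {r : α → ℝ} {s : Set α} {C : ℝ} (hr : Integrable r μ)
    (hC : ∀ᵐ x ∂μ, r x ≤ C) (hs : ∀ᵐ x ∂μ, x ∉ s → r x ≤ 0) :
    ∫ x, r x ∂μ ≤ C * μ.real s := by
  -- `s` need not be measurable, so compare with the indicator of a measurable hull.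
  have hm := measurableSet_toMeasurable μ s
  calc ∫ x, r x ∂μ ≤ ∫ x, (toMeasurable μ s).indicator (fun _ ↦ C) x ∂μ := by
        refine integral_mono_ae hr ((integrable_const C).indicator hm) ?_
        filter_upwards [hC, hs] with x hxC hxs
        by_cases hx : x ∈ toMeasurable μ s
        · rwa [indicator_of_mem hx]
        · rw [indicator_of_notMem hx]
          exact hxs fun h ↦ hx (subset_toMeasurable μ s h)
    _ = C * μ.real s := by
        rw [integral_indicator_const C hm, smul_eq_mul, mul_comm, measureReal_def,
          measureReal_def, measure_toMeasurable]

theorem integral_le_mul_exp_integral_mul_measureReal {ρ k : ℝ → ℝ} {s : Set ℝ} {C a b : ℝ}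
    (hab : a ≤ b) (hC : 0 ≤ C) (hs : volume s ≠ ⊤) (hρ : IntervalIntegrable ρ volume a b)
    (hk : IntervalIntegrable k volume a b) (hk0 : ∀ᵐ t, t ∈ Icc a b → 0 ≤ k t)
    (hρC : ∀ᵐ t, t ∈ Icc a b → ρ t ≤ k t * (∫ τ in a..t, ρ τ) + C)
    (hρs : ∀ᵐ t, t ∈ Icc a b → t ∉ s → ρ t ≤ k t * ∫ τ in a..t, ρ τ) :
    ∫ t in a..b, ρ t ≤ C * Real.exp (∫ t in a..b, k t) * volume.real s := by
  set Φ : ℝ → ℝ := fun t ↦ ∫ τ in a..t, ρ τ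
  have hkΦ : IntervalIntegrable (fun t ↦ k t * Φ t) volume a b := hk.mul_continuousOn
    (hρ.absolutelyContinuousOnInterval_intervalIntegral left_mem_uIcc).continuousOn
  rw [mul_right_comm]
  refine le_mul_exp_integral_of_le_add_integral hab hk hk0 hkΦ fun t ht ↦ ?_
  have hsub : uIcc a t ⊆ uIcc a b := uIcc_subset_uIcc left_mem_uIcc (Icc_subset_uIcc ht)
  have hρt : IntervalIntegrable ρ volume a t := hρ.mono_set hsub
  have hkΦt : IntervalIntegrable (fun τ ↦ k τ * Φ τ) volume a t := hkΦ.mono_set hsub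
  have hrest {p : ℝ → Prop} (h : ∀ᵐ τ, τ ∈ Icc a b → p τ) :
      ∀ᵐ τ ∂volume.restrict (Ioc a t), p τ :=
    (ae_restrict_iff' measurableSet_Ioc).2 <| h.mono fun τ hτ hτt ↦
      hτ (Icc_subset_Icc_right ht.2 (Ioc_subset_Icc_self hτt))
  have hgap : Φ t - ∫ τ in a..t, k τ * Φ τ ≤ C * volume.real s := calc
    Φ t - ∫ τ in a..t, k τ * Φ τ = ∫ τ in Ioc a t, ρ τ - k τ * Φ τ := by
      rw [← intervalIntegral.integral_sub hρt hkΦt, intervalIntegral.integral_of_le ht.1]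
    _ ≤ C * (volume.restrict (Ioc a t)).real s :=
      integral_le_mul_measureReal_of_ae_le (hρt.1.sub hkΦt.1)
        ((hrest hρC).mono fun τ h ↦ by linarith) ((hrest hρs).mono fun τ h hτ ↦ by linarith [h hτ])
    _ ≤ C * volume.real s := by
      gcongr
      exact ENNReal.toReal_mono hs (Measure.restrict_apply_le _ _)
  linarith

theorem nonneg_of_norm_sub_le_mul_norm_sub {E G : Type*} [NormedAddCommGroup E] [Nontrivial E]
    [SeminormedAddCommGroup G] {F : E → G} {k : ℝ} (h : ∀ x x', ‖F x - F x'‖ ≤ k * ‖x - x'‖) :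
    0 ≤ k := by
  obtain ⟨x, hx⟩ := exists_ne (0 : E)
  have := (norm_nonneg _).trans (h x 0)
  rw [sub_zero] at this
  exact nonneg_of_mul_nonneg_left this (norm_pos_iff.2 hx)

theorem nonneg_of_ae_norm_le {α G : Type*} [MeasurableSpace α] [SeminormedAddCommGroup G]
    {μ : Measure α} {s : Set α} {g : α → G} {c : ℝ} (hs : MeasurableSet s) (hμs : μ s ≠ 0)
    (h : ∀ᵐ t ∂μ, t ∈ s → ‖g t‖ ≤ c) : 0 ≤ c := by
  obtain ⟨t, -, ht⟩ := Measure.exists_mem_of_measure_ne_zero_of_ae hμs ((ae_restrict_iff' hs).2 h)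
  exact (norm_nonneg _).trans ht

theorem norm_sub_le_mul_norm_sub_add_two_mul {E V G : Type*} [SeminormedAddCommGroup E]
    [SeminormedAddCommGroup G] {F : E → V → G} {S : Set V} {k c : ℝ}
    (hlip : ∀ x x', ∀ v ∈ S, ‖F x v - F x' v‖ ≤ k * ‖x - x'‖) (hbd : ∀ x, ∀ v ∈ S, ‖F x v‖ ≤ c)
    (x x' : E) {v v' : V} (hv : v ∈ S) (hv' : v' ∈ S) :
    ‖F x v - F x' v'‖ ≤ k * ‖x - x'‖ + 2 * c := by
  have := (norm_sub_le_norm_sub_add_norm_sub (F x v) (F x' v) (F x' v')).trans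
    (add_le_add_right (norm_sub_le _ _) _)
  linarith [hlip x x' v hv, hbd x' v hv, hbd x' v' hv']

theorem norm_intervalIntegral_sub_le {E : Type*} [NormedAddCommGroup E] [NormedSpace ℝ E]
    {F G : ℝ → E} {a b t : ℝ} (ht : t ∈ Icc a b) (hF : IntervalIntegrable F volume a b)
    (hG : IntervalIntegrable G volume a b) :
    ‖(∫ s in a..t, F s) - ∫ s in a..t, G s‖ ≤ ∫ s in a..t, ‖F s - G s‖ := by
  have hsub : uIcc a t ⊆ uIcc a b := uIcc_subset_uIcc left_mem_uIcc (Icc_subset_uIcc ht)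
  rw [← intervalIntegral.integral_sub (hF.mono_set hsub) (hG.mono_set hsub)]
  exact intervalIntegral.norm_integral_le_integral_norm ht.1

theorem trajectory_W11_estimate_in_control_general
    {Ω : Type*} {n m : ℕ}
    (T : ℝ) (hT : 0 < T)
    (U : ℝ → Set (EuclideanSpace ℝ (Fin m)))
    (f : ℝ → EuclideanSpace ℝ (Fin n) → EuclideanSpace ℝ (Fin m) → Ω →
      EuclideanSpace ℝ (Fin n))
    (kf : ℝ → ℝ) (hkf : IntervalIntegrable kf volume 0 T)
    (c : ℝ)
    (hlip : ∀ᵐ t ∂volume, t ∈ Icc (0 : ℝ) T → ∀ x x' v ω, v ∈ U t →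
      ‖f t x v ω - f t x' v ω‖ ≤ kf t * ‖x - x'‖)
    (hbd : ∀ᵐ t ∂volume, t ∈ Icc (0 : ℝ) T → ∀ x v ω, v ∈ U t → ‖f t x v ω‖ ≤ c)
    (x0 : EuclideanSpace ℝ (Fin n)) (ω : Ω)
    (u u' : ℝ → EuclideanSpace ℝ (Fin m))
    (hu : ∀ᵐ t ∂volume, t ∈ Icc (0 : ℝ) T → u t ∈ U t)
    (hu' : ∀ᵐ t ∂volume, t ∈ Icc (0 : ℝ) T → u' t ∈ U t)
    (xu xu' : ℝ → EuclideanSpace ℝ (Fin n))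
    (hxuint : IntervalIntegrable (fun s => f s (xu s) (u s) ω) volume 0 T)
    (hxu'int : IntervalIntegrable (fun s => f s (xu' s) (u' s) ω) volume 0 T)
    (hxu : ∀ t ∈ Icc (0 : ℝ) T, xu t = x0 + ∫ s in (0 : ℝ)..t, f s (xu s) (u s) ω)
    (hxu' : ∀ t ∈ Icc (0 : ℝ) T, xu' t = x0 + ∫ s in (0 : ℝ)..t, f s (xu' s) (u' s) ω) :
    (∫ t in (0 : ℝ)..T, ‖f t (xu t) (u t) ω - f t (xu' t) (u' t) ω‖)
      ≤ 2 * c * Real.exp (∫ s in (0 : ℝ)..T, kf s) *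
        (volume {t | t ∈ Icc (0 : ℝ) T ∧ u t ≠ u' t}).toReal := by
  set ρ : ℝ → ℝ := fun t ↦ ‖f t (xu t) (u t) ω - f t (xu' t) (u' t) ω‖
  have hc : 0 ≤ c := by
    refine nonneg_of_ae_norm_le (g := fun t ↦ f t x0 (u t) ω) measurableSet_Icc
      (by simp [hT] : volume (Icc 0 T) ≠ 0) ?_
    filter_upwards [hbd, hu] with t hb hut ht using hb ht x0 (u t) ω (hut ht)
  rcases subsingleton_or_nontrivial (EuclideanSpace ℝ (Fin n)) with hn | hn
  · simp only [ρ, norm_of_subsingleton, intervalIntegral.integral_zero]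
    positivity
  have hkf0 : ∀ᵐ t, t ∈ Icc 0 T → 0 ≤ kf t := by
    filter_upwards [hlip, hu] with t hl hut ht
    exact nonneg_of_norm_sub_le_mul_norm_sub fun x x' ↦ hl ht x x' (u t) ω (hut ht)
  have hgap : ∀ t ∈ Icc 0 T, ‖xu t - xu' t‖ ≤ ∫ τ in (0 : ℝ)..t, ρ τ := fun t ht ↦ by
    rw [hxu t ht, hxu' t ht, add_sub_add_left_eq_sub]
    exact norm_intervalIntegral_sub_le ht hxuint hxu'int
  refine integral_le_mul_exp_integral_mul_measureReal hT.le (by positivity)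
    (measure_ne_top_of_subset (fun t ht ↦ ht.1) measure_Icc_lt_top.ne) (hxuint.sub hxu'int).norm
    hkf hkf0 ?_ ?_
  · filter_upwards [hlip, hbd, hu, hu', hkf0] with t hl hb hut hut' hk ht
    linarith [mul_le_mul_of_nonneg_left (hgap t ht) (hk ht),
      norm_sub_le_mul_norm_sub_add_two_mul (hl ht · · · ω) (hb ht · · ω)
      (xu t) (xu' t) (hut ht) (hut' ht)]
  · filter_upwards [hlip, hu', hkf0] with t hl hut' hk ht hts
    have heq : u t = u' t := not_not.1 fun h ↦ hts ⟨ht, h⟩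
    simpa only [ρ, heq] using
      (hl ht _ _ _ ω (hut' ht)).trans (mul_le_mul_of_nonneg_left (hgap t ht) (hk ht))

/-- Lemma 5.1(i): the W^{1,1}-distance between trajectories corresponding to two
controls is bounded by 2c·exp(∫₀ᵀ k_f)·(Ekeland distance of the controls). -/
theorem trajectory_W11_estimate_in_control
    {Ω : Type*} [MetricSpace Ω] {n m : ℕ}
    (T : ℝ) (hT : 0 < T)
    (U : ℝ → Set (EuclideanSpace ℝ (Fin m)))
    (f : ℝ → EuclideanSpace ℝ (Fin n) → EuclideanSpace ℝ (Fin m) → Ω →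
      EuclideanSpace ℝ (Fin n))
    (kf : ℝ → ℝ) (hkf : IntervalIntegrable kf volume 0 T)
    (c : ℝ)
    (hlip : ∀ᵐ t ∂volume, t ∈ Icc (0 : ℝ) T → ∀ x x' v ω, v ∈ U t →
      ‖f t x v ω - f t x' v ω‖ ≤ kf t * ‖x - x'‖)
    (hbd : ∀ᵐ t ∂volume, t ∈ Icc (0 : ℝ) T → ∀ x v ω, v ∈ U t → ‖f t x v ω‖ ≤ c)
    (x0 : EuclideanSpace ℝ (Fin n)) (ω : Ω)
    (u u' : ℝ → EuclideanSpace ℝ (Fin m))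
    (hu : ∀ᵐ t ∂volume, t ∈ Icc (0 : ℝ) T → u t ∈ U t)
    (hu' : ∀ᵐ t ∂volume, t ∈ Icc (0 : ℝ) T → u' t ∈ U t)
    (xu xu' : ℝ → EuclideanSpace ℝ (Fin n))
    (hxuint : IntervalIntegrable (fun s => f s (xu s) (u s) ω) volume 0 T)
    (hxu'int : IntervalIntegrable (fun s => f s (xu' s) (u' s) ω) volume 0 T)
    (hxu : ∀ t ∈ Icc (0 : ℝ) T, xu t = x0 + ∫ s in (0 : ℝ)..t, f s (xu s) (u s) ω)
    (hxu' : ∀ t ∈ Icc (0 : ℝ) T, xu' t = x0 + ∫ s in (0 : ℝ)..t, f s (xu' s) (u' s) ω) :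
    (∫ t in (0 : ℝ)..T, ‖f t (xu t) (u t) ω - f t (xu' t) (u' t) ω‖)
      ≤ 2 * c * Real.exp (∫ s in (0 : ℝ)..T, kf s) *
        (volume {t | t ∈ Icc (0 : ℝ) T ∧ u t ≠ u' t}).toReal :=
  trajectory_W11_estimate_in_control_general T hT U f kf hkf c hlip hbd x0 ω u u' hu hu' xu xu'
    hxuint hxu'int hxu hxu'
end
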